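/- For every choice of (a,b,c) ∈ {0,1}⁴ × {0,1}⁴ × {0,1}⁴ and every integer d ≥ 7, the matrix d·I₄ − M(a,b,c) is invertible over ℚ, i.e. det(d·I₄ − M(a,b,c)) ≠ 0. -/

import Mathlib

/-! For `x, y ∈ {0,1}` one has `|x - y| + (x + y) ≤ 2`, so every row of `M(a,b,c)` has absolute
row sum at most `6`. By Gershgorin's theorem every eigenvalue of `M(a,b,c)` then has modulus at
most `6`, and `d ≥ 7` is not one of them. -/

noncomputable section

/-- The symmetric 4×4 matrix `M(a,b,c)` associated with ON/OFF data
`a, b, c ∈ {0,1}⁴` (indexed so that `a 0 = a₁`, …, `a 3 = a₄`, etc.),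
here with entries in `ℚ`. -/
def Mabc (a b c : Fin 4 → ℚ) : Matrix (Fin 4) (Fin 4) ℚ :=
  !![a 2 + a 3 + b 0 + b 1 + c 0 + c 1, a 2 - a 3, c 0 - c 1, b 0 - b 1;
     a 2 - a 3, a 2 + a 3 + b 2 + b 3 + c 2 + c 3, b 2 - b 3, c 2 - c 3;
     c 0 - c 1, b 2 - b 3, a 0 + a 1 + b 2 + b 3 + c 0 + c 1, a 0 - a 1;
     b 0 - b 1, c 2 - c 3, a 0 - a 1, a 0 + a 1 + b 0 + b 1 + c 2 + c 3]

open Finset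

theorem Matrix.det_smul_one_sub_ne_zero_of_sum_row_lt {K n : Type*} [NormedField K] [Fintype n]
    [DecidableEq n] (M : Matrix n n K) (d : K) (h : ∀ k, ∑ j, ‖M k j‖ < ‖d‖) :
    (d • (1 : Matrix n n K) - M).det ≠ 0 := by
  refine det_ne_zero_of_sum_row_lt_diag fun k ↦ ?_
  have hoff : ∀ j ∈ univ.erase k, ‖(d • (1 : Matrix n n K) - M) k j‖ = ‖M k j‖ := fun j hj ↦ by
    simp [Matrix.one_apply_ne' (ne_of_mem_erase hj)]
  rw [sum_congr rfl hoff, sum_erase_eq_sub (mem_univ k)]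
  calc ∑ j, ‖M k j‖ - ‖M k k‖ < ‖d‖ - ‖M k k‖ := by linarith [h k]
    _ ≤ ‖d - M k k‖ := norm_sub_norm_le d (M k k)
    _ = ‖(d • (1 : Matrix n n K) - M) k k‖ := by simp

theorem norm_sub_add_norm_add_le_two {x y : ℚ} (hx : x = 0 ∨ x = 1) (hy : y = 0 ∨ y = 1) :
    ‖x - y‖ + ‖x + y‖ ≤ 2 := by
  rcases hx with rfl | rfl <;> rcases hy with rfl | rfl <;> norm_num [← Rat.norm_cast_real]

theorem norm_three_diffs_add_norm_sum_le_six {x₁ y₁ x₂ y₂ x₃ y₃ : ℚ}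
    (hx₁ : x₁ = 0 ∨ x₁ = 1) (hy₁ : y₁ = 0 ∨ y₁ = 1) (hx₂ : x₂ = 0 ∨ x₂ = 1)
    (hy₂ : y₂ = 0 ∨ y₂ = 1) (hx₃ : x₃ = 0 ∨ x₃ = 1) (hy₃ : y₃ = 0 ∨ y₃ = 1) :
    ‖x₁ - y₁‖ + ‖x₂ - y₂‖ + ‖x₃ - y₃‖ + ‖x₁ + y₁ + x₂ + y₂ + x₃ + y₃‖ ≤ 6 := by
  have hsum : ‖x₁ + y₁ + x₂ + y₂ + x₃ + y₃‖ ≤ ‖x₁ + y₁‖ + ‖x₂ + y₂‖ + ‖x₃ + y₃‖ := by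
    simpa only [add_assoc] using norm_add₃_le (a := x₁ + y₁) (b := x₂ + y₂) (c := x₃ + y₃)
  linarith [norm_sub_add_norm_add_le_two hx₁ hy₁, norm_sub_add_norm_add_le_two hx₂ hy₂,
    norm_sub_add_norm_add_le_two hx₃ hy₃]

theorem sum_norm_Mabc_row_le_six {a b c : Fin 4 → ℚ}
    (ha : ∀ i, a i = 0 ∨ a i = 1) (hb : ∀ i, b i = 0 ∨ b i = 1)
    (hc : ∀ i, c i = 0 ∨ c i = 1) (k : Fin 4) :
    ∑ j, ‖Mabc a b c k j‖ ≤ 6 := by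
  fin_cases k <;>
    simp only [Mabc, Fin.sum_univ_four, Fin.isValue, Fin.zero_eta, Fin.mk_one, Fin.reduceFinMk,
      Matrix.of_apply, Matrix.cons_val', Matrix.cons_val_fin_one, Matrix.cons_val_zero,
      Matrix.cons_val_one, Matrix.cons_val]
  · linarith [norm_three_diffs_add_norm_sum_le_six (ha 2) (ha 3) (hb 0) (hb 1) (hc 0) (hc 1)]
  · linarith [norm_three_diffs_add_norm_sum_le_six (ha 2) (ha 3) (hb 2) (hb 3) (hc 2) (hc 3)]
  · linarith [norm_three_diffs_add_norm_sum_le_six (ha 0) (ha 1) (hb 2) (hb 3) (hc 0) (hc 1)]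
  · linarith [norm_three_diffs_add_norm_sum_le_six (ha 0) (ha 1) (hb 0) (hb 1) (hc 2) (hc 3)]

/-- For every ON/OFF data `(a,b,c) ∈ {0,1}¹²` and every integer `d ≥ 7`, the matrix
`d·I₄ − M(a,b,c)` is invertible over `ℚ`, i.e. its determinant is nonzero. -/
theorem det_sub_Mabc_ne_zero (a b c : Fin 4 → ℚ)
    (ha : ∀ i, a i = 0 ∨ a i = 1) (hb : ∀ i, b i = 0 ∨ b i = 1)
    (hc : ∀ i, c i = 0 ∨ c i = 1)
    (d : ℤ) (hd : 7 ≤ d) :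
    ((d : ℚ) • (1 : Matrix (Fin 4) (Fin 4) ℚ) - Mabc a b c).det ≠ 0 := by
  have hnorm_d : (7 : ℝ) ≤ ‖(d : ℚ)‖ := by
    rw [Int.norm_cast_rat, Int.norm_eq_abs]
    exact le_abs.mpr (Or.inl (by exact_mod_cast hd))
  refine Matrix.det_smul_one_sub_ne_zero_of_sum_row_lt _ _ fun k ↦ ?_
  linarith [sum_norm_Mabc_row_le_six ha hb hc k]
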